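/- arXiv:1206.1757 — 7 statements merged into one kernel-verified Lean document; each statement's English description precedes it below -/
import Mathlib

section
/- The angular momentum 𝛍 = 𝐪×𝐯 is an integral of motion: along any solution (q(t),v(t)) of the Kepler equations on S³ lying in TS³ with −1 < q0(t) < 1, the ℝ³-valued function t ↦ 𝐪(t)×𝐯(t) is constant. -/
open Matrix Real

noncomputable section

/-- The spatial (last three) components of a vector in `ℝ⁴`. -/
def sp (q : Fin 4 → ℝ) : Fin 3 → ℝ := fun i => q i.succ

/-- The Euclidean norm on `ℝ³`, written via the dot product. -/
def nrm3 (x : Fin 3 → ℝ) : ℝ := Real.sqrt (x ⬝ᵥ x)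

/-- The first standard basis vector `e₀ = (1,0,0,0)` of `ℝ⁴`. -/
def e0 : Fin 4 → ℝ := fun i => if i = 0 then 1 else 0

/-- The (constraint set defining the) tangent bundle `TS³ ⊂ ℝ⁴ × ℝ⁴`. -/
def TS3 : Set ((Fin 4 → ℝ) × (Fin 4 → ℝ)) :=
  {p | p.1 ⬝ᵥ p.1 = 1 ∧ p.1 ⬝ᵥ p.2 = 0}

/-- Right hand side of the Kepler equations of motion on `S³`:
`v̇ = γ e₀/(1-q₀²)^{3/2} - (⟨v,v⟩ + γ q₀/(1-q₀²)^{3/2}) q`. -/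
def keplerRHS (γ : ℝ) (q v : Fin 4 → ℝ) : Fin 4 → ℝ :=
  (γ / (1 - q 0 ^ 2) ^ ((3 : ℝ) / 2)) • e0
    - (v ⬝ᵥ v + γ * q 0 / (1 - q 0 ^ 2) ^ ((3 : ℝ) / 2)) • q

/-- The Kepler Hamiltonian on `S³`: `H = ½⟨v,v⟩ - γ q₀ / (1-q₀²)^{1/2}`. -/
def Hham (γ : ℝ) (p : (Fin 4 → ℝ) × (Fin 4 → ℝ)) : ℝ :=
  (1 / 2) * (p.2 ⬝ᵥ p.2) - γ * p.1 0 / Real.sqrt (1 - p.1 0 ^ 2)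

/-- The angular momentum `𝛍 = 𝐪 × 𝐯`. -/
def mu (p : (Fin 4 → ℝ) × (Fin 4 → ℝ)) : Fin 3 → ℝ :=
  crossProduct (sp p.1) (sp p.2)

/-- The vector `𝛑 = q₀ 𝐯 - v₀ 𝐪`. -/
def pivec (p : (Fin 4 → ℝ) × (Fin 4 → ℝ)) : Fin 3 → ℝ :=
  p.1 0 • sp p.2 - p.2 0 • sp p.1

/-- The Runge–Lenz vector `𝐀 = 𝛑 × 𝛍 - γ 𝐪/|𝐪|`. -/
def rl (γ : ℝ) (p : (Fin 4 → ℝ) × (Fin 4 → ℝ)) : Fin 3 → ℝ :=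
  crossProduct (pivec p) (mu p) - (γ / nrm3 (sp p.1)) • sp p.1

/-- The energy-like integral `E = H - |𝛍|²/2`. -/
def Een (γ : ℝ) (p : (Fin 4 → ℝ) × (Fin 4 → ℝ)) : ℝ :=
  Hham γ p - (mu p ⬝ᵥ mu p) / 2

/-- `ν = γ / √(-2E)`. -/
def nuLS (γ : ℝ) (p : (Fin 4 → ℝ) × (Fin 4 → ℝ)) : ℝ :=
  γ / Real.sqrt (-2 * Een γ p)

/-! The force `keplerRHS` has spatial part parallel to `𝐪` (as `e₀` has none), so
`d/dt (𝐪 × 𝐯) = 𝐯 × 𝐯 + 𝐪 × (-c 𝐪) = 0`, and a function with vanishing derivative on an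
interval is constant. -/

lemma sp_keplerRHS (γ : ℝ) (q v : Fin 4 → ℝ) :
    sp (keplerRHS γ q v) = -(v ⬝ᵥ v + γ * q 0 / (1 - q 0 ^ 2) ^ ((3 : ℝ) / 2)) • sp q := by
  ext i
  simp only [sp, keplerRHS, Pi.sub_apply, Pi.smul_apply, e0, Fin.succ_ne_zero, if_false,
    smul_eq_mul]
  ring

lemma cross_sp_keplerRHS (γ : ℝ) (q v : Fin 4 → ℝ) : sp q ⨯₃ sp (keplerRHS γ q v) = 0 := by
  rw [sp_keplerRHS, map_smul, cross_self, smul_zero]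

lemma HasDerivAt.sp {q : ℝ → Fin 4 → ℝ} {q' : Fin 4 → ℝ} {t : ℝ} (hq : HasDerivAt q q' t) :
    HasDerivAt (fun u => sp (q u)) (sp q') t :=
  hasDerivAt_pi.2 fun i => hasDerivAt_pi.1 hq i.succ

lemma HasDerivAt.crossProduct {a b : ℝ → Fin 3 → ℝ} {a' b' : Fin 3 → ℝ} {t : ℝ}
    (ha : HasDerivAt a a' t) (hb : HasDerivAt b b' t) :
    HasDerivAt (fun u => a u ⨯₃ b u) (a t ⨯₃ b' + a' ⨯₃ b t) t :=
  let B : (Fin 3 → ℝ) →L[ℝ] (Fin 3 → ℝ) →L[ℝ] Fin 3 → ℝ :=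
    LinearMap.toContinuousLinearMap
      (LinearMap.toContinuousLinearMap.toLinearMap ∘ₗ _root_.crossProduct)
  B.hasDerivAt_of_bilinear (fun _ => ha) fun _ => hb

lemma hasDerivAt_mu {q v : ℝ → Fin 4 → ℝ} {a : Fin 4 → ℝ} {t : ℝ}
    (hq : HasDerivAt q (v t) t) (hv : HasDerivAt v a t) :
    HasDerivAt (fun u => mu (q u, v u)) (sp (q t) ⨯₃ sp a) t := by
  simpa [mu, cross_self] using hq.sp.crossProduct hv.sp

lemma Convex.is_const_of_hasDerivWithinAt_zero {E : Type*} [NormedAddCommGroup E]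
    [NormedSpace ℝ E] {f : ℝ → E} {s : Set ℝ} (hs : Convex ℝ s)
    (hf : ∀ x ∈ s, HasDerivWithinAt f 0 s x) {x y : ℝ} (hx : x ∈ s) (hy : y ∈ s) :
    f x = f y := by
  simpa [sub_eq_zero] using hs.norm_image_sub_le_of_norm_hasDerivWithin_le hf (C := 0)
    (by simp) hy hx

theorem angular_momentum_is_integral_of_motion_general (γ : ℝ) (I : Set ℝ) (hI : Convex ℝ I)
    (q v : ℝ → Fin 4 → ℝ)
    (hq : ∀ t ∈ I, HasDerivAt q (v t) t)
    (hv : ∀ t ∈ I, HasDerivAt v (keplerRHS γ (q t) (v t)) t) :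
    ∀ t ∈ I, ∀ s ∈ I, mu (q t, v t) = mu (q s, v s) := by
  intro t ht s hs
  refine hI.is_const_of_hasDerivWithinAt_zero (f := fun u => mu (q u, v u)) ?_ ht hs
  intro r hr
  have hmu := hasDerivAt_mu (hq r hr) (hv r hr)
  rw [cross_sp_keplerRHS] at hmu
  exact hmu.hasDerivWithinAt

theorem angular_momentum_is_integral_of_motion (γ : ℝ) (hγ : 0 < γ) (I : Set ℝ) (hI : Convex ℝ I)
    (q v : ℝ → Fin 4 → ℝ)
    (hq : ∀ t ∈ I, HasDerivAt q (v t) t)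
    (hv : ∀ t ∈ I, HasDerivAt v (keplerRHS γ (q t) (v t)) t)
    (hTS : ∀ t ∈ I, (q t, v t) ∈ TS3)
    (hq0 : ∀ t ∈ I, -1 < q t 0 ∧ q t 0 < 1) :
    ∀ t ∈ I, ∀ s ∈ I, mu (q t, v t) = mu (q s, v s) :=
  angular_momentum_is_integral_of_motion_general γ I hI q v hq hv

end
end

section
/- At every point (q,v) ∈ TS³ with 𝐪 ≠ 0, one has 𝐪·(𝛑×𝛍) = q0|𝛍|², and consequently the equation of the trajectory 𝐀·𝐪 = q0|𝛍|² − γ|𝐪| holds. -/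
open Matrix Real

noncomputable section

/-! Cycling the triple product gives `𝐪 · (𝛑 × 𝛍) = 𝛍 · (𝐪 × 𝛑)`, and `𝐪 × 𝛑 = q₀ (𝐪 × 𝐯) = q₀ 𝛍`
because `𝐪 × 𝐪 = 0`. The trajectory equation follows by adding `-γ 𝐪/|𝐪| · 𝐪 = -γ |𝐪|`. -/

theorem cross_smul_sub_smul_self {R : Type*} [CommRing R] (u v : Fin 3 → R) (a b : R) :
    u ⨯₃ (a • v - b • u) = a • u ⨯₃ v := by
  simp only [map_sub, map_smul, cross_self, smul_zero, sub_zero]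

theorem dot_cross_cross_smul_sub_smul {R : Type*} [CommRing R] (u v : Fin 3 → R) (a b : R) :
    u ⬝ᵥ (a • v - b • u) ⨯₃ (u ⨯₃ v) = a * (u ⨯₃ v ⬝ᵥ u ⨯₃ v) := by
  rw [triple_product_permutation, triple_product_permutation, cross_smul_sub_smul_self,
    dotProduct_smul, smul_eq_mul]

theorem sq_nrm3 (x : Fin 3 → ℝ) : nrm3 x ^ 2 = x ⬝ᵥ x :=
  Real.sq_sqrt (by simpa using dotProduct_star_self_nonneg x)

theorem div_mul_sq_eq_mul {K : Type*} [Field K] (a b : K) : a / b * b ^ 2 = a * b := by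
  rcases eq_or_ne b 0 with rfl | hb
  · simp
  · field_simp

theorem trajectory_equation_general (γ : ℝ)
    (p : (Fin 4 → ℝ) × (Fin 4 → ℝ)) :
    sp p.1 ⬝ᵥ crossProduct (pivec p) (mu p) = p.1 0 * (mu p ⬝ᵥ mu p) ∧
    rl γ p ⬝ᵥ sp p.1 = p.1 0 * (mu p ⬝ᵥ mu p) - γ * nrm3 (sp p.1) := by
  have hπμ : sp p.1 ⬝ᵥ pivec p ⨯₃ mu p = p.1 0 * (mu p ⬝ᵥ mu p) :=
    dot_cross_cross_smul_sub_smul _ _ _ _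
  refine ⟨hπμ, ?_⟩
  rw [rl, sub_dotProduct, smul_dotProduct, dotProduct_comm, hπμ, ← sq_nrm3 (sp p.1), smul_eq_mul,
    div_mul_sq_eq_mul]

theorem trajectory_equation (γ : ℝ) (hγ : 0 < γ)
    (p : (Fin 4 → ℝ) × (Fin 4 → ℝ)) (hp : p ∈ TS3) (hqnz : sp p.1 ≠ 0) :
    sp p.1 ⬝ᵥ crossProduct (pivec p) (mu p) = p.1 0 * (mu p ⬝ᵥ mu p) ∧
    rl γ p ⬝ᵥ sp p.1 = p.1 0 * (mu p ⬝ᵥ mu p) - γ * nrm3 (sp p.1) :=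
  trajectory_equation_general γ p

end
end

section
/- At every point (q,v) ∈ TS³ with 𝐪 ≠ 0, the squared length of the Runge–Lenz vector satisfies |𝐀|² = γ² + 2E|𝛍|², where E = H − |𝛍|²/2; equivalently, the eccentricity vector 𝐞 = 𝐀/γ satisfies |𝐞|² = 1 + (2E/γ²)|𝛍|². In particular, if E < 0 then the modified eccentricity vector 𝐞̃ = −ν𝐞, with ν = γ/√(−2E), satisfies 𝛍·𝐞̃ = 0 and |𝛍|² + |𝐞̃|² = ν². -/
open Matrix Real

noncomputable section

/-!
On `TS³` the pair `(𝛑, 𝛍)` has `|𝛑|² + |𝛍|² = |v|²`, while `𝛑 ⊥ 𝛍` and `𝐪 · (𝛑 × 𝛍) = q₀ |𝛍|²`.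
Expanding `|𝛑 × 𝛍 - γ 𝐪/|𝐪||²` therefore gives `(|v|² - |𝛍|²)|𝛍|² - 2γ q₀ |𝛍|²/|𝐪| + γ²`,
and since `|𝐪| = √(1 - q₀²)` this is `γ² + 2E|𝛍|²`. The statements about `𝐞` and `𝐞̃` are
rescalings of this identity, together with `𝛍 ⊥ 𝐀`.
-/

section PlueckerCoordinates

variable (p : (Fin 4 → ℝ) × (Fin 4 → ℝ))

lemma sp_dotProduct_sp (q w : Fin 4 → ℝ) : sp q ⬝ᵥ sp w = q ⬝ᵥ w - q 0 * w 0 := by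
  simp only [sp, dotProduct, Fin.sum_univ_succ (n := 3)]
  ring

-- `(𝛑, 𝛍)` are the Plücker coordinates of `q ∧ v`, so this is Lagrange's identity in `ℝ⁴`.
lemma pivec_dotProduct_self_add_mu_dotProduct_self :
    pivec p ⬝ᵥ pivec p + mu p ⬝ᵥ mu p = (p.1 ⬝ᵥ p.1) * (p.2 ⬝ᵥ p.2) - (p.1 ⬝ᵥ p.2) ^ 2 := by
  simp [pivec, mu, sp, dotProduct, Fin.sum_univ_succ, cross_apply]
  ring

lemma pivec_dotProduct_mu : pivec p ⬝ᵥ mu p = 0 := by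
  simp only [pivec, mu, sub_dotProduct, smul_dotProduct, dot_self_cross, dot_cross_self,
    smul_zero, sub_zero]

lemma sp_crossProduct_pivec : sp p.1 ⨯₃ pivec p = p.1 0 • mu p := by
  rw [pivec, mu, map_sub, map_smul, map_smul, cross_self, smul_zero, sub_zero]

lemma sp_dotProduct_crossProduct_pivec_mu :
    sp p.1 ⬝ᵥ pivec p ⨯₃ mu p = p.1 0 * (mu p ⬝ᵥ mu p) := by
  rw [triple_product_permutation, triple_product_permutation, sp_crossProduct_pivec,
    dotProduct_smul, smul_eq_mul]

lemma rl_dotProduct_self (γ : ℝ) :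
    rl γ p ⬝ᵥ rl γ p = (pivec p ⬝ᵥ pivec p) * (mu p ⬝ᵥ mu p)
      - 2 * (γ / nrm3 (sp p.1)) * (p.1 0 * (mu p ⬝ᵥ mu p))
      + (γ / nrm3 (sp p.1)) ^ 2 * (sp p.1 ⬝ᵥ sp p.1) := by
  have hcross : pivec p ⨯₃ mu p ⬝ᵥ pivec p ⨯₃ mu p = (pivec p ⬝ᵥ pivec p) * (mu p ⬝ᵥ mu p) := by
    rw [cross_dot_cross, pivec_dotProduct_mu, zero_mul, sub_zero]
  rw [rl]
  simp only [sub_dotProduct, dotProduct_sub, smul_dotProduct, dotProduct_smul, smul_eq_mul,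
    hcross, dotProduct_comm _ (sp p.1), sp_dotProduct_crossProduct_pivec_mu]
  ring

lemma mu_dotProduct_rl (γ : ℝ) : mu p ⬝ᵥ rl γ p = 0 := by
  rw [rl, dotProduct_sub, dotProduct_smul, dot_cross_self, dotProduct_comm, mu, dot_self_cross,
    smul_zero, sub_zero]

end PlueckerCoordinates

section TangentBundle

variable {p : (Fin 4 → ℝ) × (Fin 4 → ℝ)}

lemma sp_dotProduct_self_of_mem_TS3 (hp : p ∈ TS3) : sp p.1 ⬝ᵥ sp p.1 = 1 - p.1 0 ^ 2 := by
  rw [sp_dotProduct_sp, hp.1, sq]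

lemma pivec_dotProduct_self_of_mem_TS3 (hp : p ∈ TS3) :
    pivec p ⬝ᵥ pivec p = p.2 ⬝ᵥ p.2 - mu p ⬝ᵥ mu p := by
  rw [eq_sub_iff_add_eq, pivec_dotProduct_self_add_mu_dotProduct_self, hp.1, hp.2]
  ring

theorem rl_dotProduct_self_of_mem_TS3 (γ : ℝ) (hp : p ∈ TS3) (hq : sp p.1 ≠ 0) :
    rl γ p ⬝ᵥ rl γ p = γ ^ 2 + 2 * Een γ p * (mu p ⬝ᵥ mu p) := by
  have hQQ : 0 < sp p.1 ⬝ᵥ sp p.1 := by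
    simpa using dotProduct_star_self_pos_iff.2 hq
  have hs : 0 < nrm3 (sp p.1) := Real.sqrt_pos.mpr hQQ
  have hs_sq : nrm3 (sp p.1) ^ 2 = sp p.1 ⬝ᵥ sp p.1 := Real.sq_sqrt hQQ.le
  have hsqrt : Real.sqrt (1 - p.1 0 ^ 2) = nrm3 (sp p.1) := by
    rw [nrm3, sp_dotProduct_self_of_mem_TS3 hp]
  rw [rl_dotProduct_self, pivec_dotProduct_self_of_mem_TS3 hp, Een, Hham, hsqrt, ← hs_sq]
  field_simp
  ring

end TangentBundle

section Eccentricity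

variable {ι : Type*} [Fintype ι] {A : ι → ℝ} {γ E M : ℝ}

lemma inv_smul_dotProduct_inv_smul (hγ : γ ≠ 0) (hA : A ⬝ᵥ A = γ ^ 2 + 2 * E * M) :
    (γ⁻¹ • A) ⬝ᵥ (γ⁻¹ • A) = 1 + 2 * E / γ ^ 2 * M := by
  rw [smul_dotProduct, dotProduct_smul, hA, smul_eq_mul, smul_eq_mul]
  field_simp

lemma add_neg_smul_dotProduct_self_eq_sq {e : ι → ℝ} (hγ : γ ≠ 0) (hE : E < 0)
    (he : e ⬝ᵥ e = 1 + 2 * E / γ ^ 2 * M) :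
    M + (-(γ / √(-2 * E)) • e) ⬝ᵥ (-(γ / √(-2 * E)) • e) = (γ / √(-2 * E)) ^ 2 := by
  have hν : (γ / √(-2 * E)) ^ 2 = γ ^ 2 / (-2 * E) := by
    rw [div_pow, Real.sq_sqrt (by linarith)]
  rw [smul_dotProduct, dotProduct_smul, he, smul_eq_mul, smul_eq_mul, ← mul_assoc, ← sq, neg_sq,
    hν]
  have := hE.ne
  field_simp
  ring

end Eccentricity

theorem runge_lenz_length_and_eccentricity (γ : ℝ) (hγ : 0 < γ)
    (p : (Fin 4 → ℝ) × (Fin 4 → ℝ)) (hp : p ∈ TS3) (hqnz : sp p.1 ≠ 0) :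
    rl γ p ⬝ᵥ rl γ p = γ ^ 2 + 2 * Een γ p * (mu p ⬝ᵥ mu p) ∧
    (γ⁻¹ • rl γ p) ⬝ᵥ (γ⁻¹ • rl γ p) = 1 + 2 * Een γ p / γ ^ 2 * (mu p ⬝ᵥ mu p) ∧
    (Een γ p < 0 →
      mu p ⬝ᵥ (-(nuLS γ p) • (γ⁻¹ • rl γ p)) = 0 ∧
      (mu p ⬝ᵥ mu p) +
        (-(nuLS γ p) • (γ⁻¹ • rl γ p)) ⬝ᵥ (-(nuLS γ p) • (γ⁻¹ • rl γ p)) = nuLS γ p ^ 2) := by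
  have hA := rl_dotProduct_self_of_mem_TS3 γ hp hqnz
  have he := inv_smul_dotProduct_inv_smul hγ.ne' hA
  refine ⟨hA, he, fun hE => ⟨?_, add_neg_smul_dotProduct_self_eq_sq hγ.ne' hE he⟩⟩
  rw [dotProduct_smul, dotProduct_smul, mu_dotProduct_rl, smul_zero, smul_zero]

end
end

section
/- Along any solution (q(t),v(t)) of the Kepler equations on S³ lying in TS³ with −1 < q0(t) < 1 and 𝐪(t) ≠ 0, the vector 𝛑 = q0𝐯 − v0𝐪 satisfies d𝛑/dt = −γ𝐪/|𝐪|³, and hence |d𝛑/dt| = γ/|𝐪|². -/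
open Matrix Real

noncomputable section

theorem pivec_derivative (γ : ℝ) (hγ : 0 < γ) (I : Set ℝ) (hI : Convex ℝ I)
    (q v : ℝ → Fin 4 → ℝ)
    (hq : ∀ t ∈ I, HasDerivAt q (v t) t)
    (hv : ∀ t ∈ I, HasDerivAt v (keplerRHS γ (q t) (v t)) t)
    (hTS : ∀ t ∈ I, (q t, v t) ∈ TS3)
    (hq0 : ∀ t ∈ I, -1 < q t 0 ∧ q t 0 < 1)
    (hqnz : ∀ t ∈ I, sp (q t) ≠ 0) :
    ∀ t ∈ I,
      HasDerivAt (fun s => pivec (q s, v s)) (-(γ / nrm3 (sp (q t)) ^ 3) • sp (q t)) t ∧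
      nrm3 (-(γ / nrm3 (sp (q t)) ^ 3) • sp (q t)) = γ / nrm3 (sp (q t)) ^ 2 := by

  intro t ht
  obtain ⟨hq1, -⟩ := hTS t ht
  have hsum : q t ⬝ᵥ q t = q t 0 * q t 0 + sp (q t) ⬝ᵥ sp (q t) := by
    simp [dotProduct, Fin.sum_univ_succ, sp]
  have hqdot : sp (q t) ⬝ᵥ sp (q t) = 1 - q t 0 ^ 2 := by nlinarith [hsum, hq1]
  have hdotpos : 0 < sp (q t) ⬝ᵥ sp (q t) := by
    rcases (Finset.sum_nonneg fun i _ => mul_self_nonneg (sp (q t) i)).lt_or_eq with h | h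
    · exact h
    · exfalso
      apply hqnz t ht
      have := (dotProduct_self_eq_zero (v := sp (q t))).mp h.symm
      exact this
  set r := nrm3 (sp (q t)) with hr
  have hrpos : 0 < r := Real.sqrt_pos.mpr hdotpos
  have hr2 : r ^ 2 = sp (q t) ⬝ᵥ sp (q t) := Real.sq_sqrt hdotpos.le
  have hrcube : r ^ 3 = (1 - q t 0 ^ 2) ^ ((3 : ℝ) / 2) := by
    have hd : (0:ℝ) ≤ 1 - q t 0 ^ 2 := by rw [← hqdot]; exact hdotpos.le
    rw [hr, nrm3, hqdot, Real.sqrt_eq_rpow, ← Real.rpow_natCast ((1 - q t 0 ^ 2) ^ ((1:ℝ)/2)) 3,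
      ← Real.rpow_mul hd]
    norm_num
  have hspos : 0 < (1 - q t 0 ^ 2) ^ ((3 : ℝ) / 2) := by
    rw [← hrcube]; positivity
  constructor
  · rw [hasDerivAt_pi]
    intro i
    have hqc : ∀ j, HasDerivAt (fun s => q s j) (v t j) t :=
      fun j => hasDerivAt_pi.mp (hq t ht) j
    have hvc : ∀ j, HasDerivAt (fun s => v s j) (keplerRHS γ (q t) (v t) j) t :=
      fun j => hasDerivAt_pi.mp (hv t ht) j
    have key : HasDerivAt (fun s => q s 0 * v s i.succ - v s 0 * q s i.succ)
        ((v t 0 * v t i.succ + q t 0 * keplerRHS γ (q t) (v t) i.succ)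
          - (keplerRHS γ (q t) (v t) 0 * q t i.succ + v t 0 * v t i.succ)) t :=
      ((hqc 0).mul (hvc i.succ)).sub ((hvc 0).mul (hqc i.succ))
    have heq : ∀ s, pivec (q s, v s) i = q s 0 * v s i.succ - v s 0 * q s i.succ := by
      intro s; simp [pivec, sp]
    have hval : (v t 0 * v t i.succ + q t 0 * keplerRHS γ (q t) (v t) i.succ)
          - (keplerRHS γ (q t) (v t) 0 * q t i.succ + v t 0 * v t i.succ)
        = (-(γ / r ^ 3) • sp (q t)) i := by
      have h0 : keplerRHS γ (q t) (v t) 0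
          = γ / (1 - q t 0 ^ 2) ^ ((3 : ℝ) / 2)
            - (v t ⬝ᵥ v t + γ * q t 0 / (1 - q t 0 ^ 2) ^ ((3 : ℝ) / 2)) * q t 0 := by
        simp [keplerRHS, e0]
      have hi : keplerRHS γ (q t) (v t) i.succ
          = - (v t ⬝ᵥ v t + γ * q t 0 / (1 - q t 0 ^ 2) ^ ((3 : ℝ) / 2)) * q t i.succ := by
        simp [keplerRHS, e0, Fin.succ_ne_zero]
        ring
      rw [h0, hi]
      have : (-(γ / r ^ 3) • sp (q t)) i = -(γ / r ^ 3) * q t i.succ := by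
        simp [sp]
      rw [this, hrcube]
      ring
    simpa [heq, hval] using key
  · have hc : |(-(γ / r ^ 3))| = γ / r ^ 3 := by
      rw [abs_neg, abs_of_pos (by positivity)]
    rw [nrm3]
    have : (-(γ / r ^ 3) • sp (q t)) ⬝ᵥ (-(γ / r ^ 3) • sp (q t))
        = (γ / r ^ 3) ^ 2 * (sp (q t) ⬝ᵥ sp (q t)) := by
      simp [dotProduct, Finset.mul_sum]
      ring_nf
    rw [this, ← hr2, Real.sqrt_mul (by positivity), Real.sqrt_sq (by positivity),
      Real.sqrt_sq hrpos.le]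
    field_simp

end
end

section
/- Let (q,v) ∈ TS³ with 𝐪 ≠ 0, q0 > 0 and E < 0, and for any φ ∈ ℝ set (x,y) = (α sinφ + β cosφ, ν(−α cosφ + β sinφ)) with α, β as defined. Then, writing x = (x0,𝐱), y = (y0,𝐲), one has 𝐱×𝐲 = 𝐪×𝐯 = 𝛍 and x0𝐲 − y0𝐱 = (1/√(−2E))(γ𝐪/|𝐪| − 𝛑×(𝐪×𝐯)) = 𝐞̃, i.e. the Ligon–Schaaf map Φ intertwines the so(4) momentum map 𝒥(x,y) = x∧y with the map J(q,v) = (𝛍, 𝐞̃). -/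
open Matrix Real

noncomputable section

/-- The vector `α` of the Ligon–Schaaf map for the Kepler problem on `S³`. -/
def alphaLS (γ : ℝ) (p : (Fin 4 → ℝ) × (Fin 4 → ℝ)) : Fin 4 → ℝ :=
  Fin.cons ((sp p.1 ⬝ᵥ pivec p) / (nuLS γ p * p.1 0))
    ((nrm3 (sp p.1))⁻¹ • sp p.1 - ((sp p.1 ⬝ᵥ pivec p) / (γ * p.1 0)) • pivec p)

/-- The vector `β` of the Ligon–Schaaf map for the Kepler problem on `S³`. -/
def betaLS (γ : ℝ) (p : (Fin 4 → ℝ) × (Fin 4 → ℝ)) : Fin 4 → ℝ :=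
  Fin.cons (nrm3 (sp p.1) / (γ * p.1 0) * (pivec p ⬝ᵥ pivec p) - 1)
    ((nrm3 (sp p.1) / (nuLS γ p * p.1 0)) • pivec p)

/-- The phase `φ = (𝐪·𝛑)/(ν q₀) = α₀` of the Ligon–Schaaf map. -/
def phiLS (γ : ℝ) (p : (Fin 4 → ℝ) × (Fin 4 → ℝ)) : ℝ :=
  (sp p.1 ⬝ᵥ pivec p) / (nuLS γ p * p.1 0)

/-- The Ligon–Schaaf map `Φ` for the Kepler problem on `S³`. -/
def PhiLS (γ : ℝ) (p : (Fin 4 → ℝ) × (Fin 4 → ℝ)) : (Fin 4 → ℝ) × (Fin 4 → ℝ) :=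
  (Real.sin (phiLS γ p) • alphaLS γ p + Real.cos (phiLS γ p) • betaLS γ p,
   nuLS γ p • (-Real.cos (phiLS γ p) • alphaLS γ p + Real.sin (phiLS γ p) • betaLS γ p))

/-! The so(4) momentum map `x ∧ y = (𝐱 × 𝐲, x₀ 𝐲 - y₀ 𝐱)` is invariant under rotating the pair
`(x, y / ν)` in its own plane, so at every phase `φ` it equals `ν (α ∧ β)`. On `TS³` one has
`𝐪 × 𝛑 = q₀ 𝛍` and `𝛑 × (𝐪 × 𝛑) = |𝛑|² 𝐪 + v₀ 𝛑`, and computing `ν (α ∧ β)` with these leaves a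
single scalar identity, the energy relation `E = |𝛑|²/2 - γ q₀/|𝐪|`. -/

theorem sp_add (x y : Fin 4 → ℝ) : sp (x + y) = sp x + sp y := rfl

theorem sp_smul (c : ℝ) (x : Fin 4 → ℝ) : sp (c • x) = c • sp x := rfl

theorem sp_cons (a : ℝ) (v : Fin 3 → ℝ) : sp (Fin.cons a v : Fin 4 → ℝ) = v := rfl

theorem dotProduct_eq_mul_add_sp (x y : Fin 4 → ℝ) : x ⬝ᵥ y = x 0 * y 0 + sp x ⬝ᵥ sp y := by
  simp [dotProduct, Fin.sum_univ_succ, sp]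

theorem nrm3_ne_zero {x : Fin 3 → ℝ} (hx : x ≠ 0) : nrm3 x ≠ 0 := by
  rw [nrm3, Real.sqrt_ne_zero']
  exact lt_of_le_of_ne (Finset.sum_nonneg fun i _ => mul_self_nonneg (x i))
    (Ne.symm (dotProduct_self_eq_zero.not.mpr hx))

theorem crossProduct_rotate {R : Type*} [CommRing R] (a b : Fin 3 → R) {s c : R} (h : s ^ 2 + c ^ 2 = 1) (ν : R) :
    crossProduct (s • a + c • b) (ν • (-c • a + s • b)) = ν • crossProduct a b := by
  simp only [map_add, map_smul, LinearMap.add_apply, LinearMap.smul_apply, cross_self,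
    smul_zero, zero_add, add_zero, ← cross_anticomm a b]
  linear_combination (norm := module) h • (ν • crossProduct a b)

theorem wedge_boost_rotate (a b : Fin 4 → ℝ) {s c : ℝ} (h : s ^ 2 + c ^ 2 = 1) (ν : ℝ) :
    (s • a + c • b) 0 • sp (ν • (-c • a + s • b)) - (ν • (-c • a + s • b)) 0 • sp (s • a + c • b)
      = ν • (a 0 • sp b - b 0 • sp a) := by
  simp only [sp_add, sp_smul, Pi.add_apply, Pi.smul_apply, smul_eq_mul]
  linear_combination (norm := module) h • (ν • (a 0 • sp b - b 0 • sp a))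

theorem cross_sp_pivec (p : (Fin 4 → ℝ) × (Fin 4 → ℝ)) :
    crossProduct (sp p.1) (pivec p) = p.1 0 • mu p := by
  simp only [pivec, mu, map_sub, map_smul, cross_self, smul_zero, sub_zero]

theorem pivec_cross_mu (p : (Fin 4 → ℝ) × (Fin 4 → ℝ)) (hq0 : p.1 0 ≠ 0) :
    crossProduct (pivec p) (mu p) =
      (p.1 0)⁻¹ • ((pivec p ⬝ᵥ pivec p) • sp p.1 - (sp p.1 ⬝ᵥ pivec p) • pivec p) := by
  rw [show mu p = (p.1 0)⁻¹ • crossProduct (sp p.1) (pivec p) by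
    rw [cross_sp_pivec, inv_smul_smul₀ hq0], map_smul, cross_cross_eq_smul_sub_smul']

theorem nuLS_smul_cross_alphaLS_betaLS {γ : ℝ} {p : (Fin 4 → ℝ) × (Fin 4 → ℝ)}
    (hν : nuLS γ p ≠ 0) (hq0 : p.1 0 ≠ 0) (hr : nrm3 (sp p.1) ≠ 0) :
    nuLS γ p • crossProduct (sp (alphaLS γ p)) (sp (betaLS γ p)) = mu p := by
  simp only [alphaLS, betaLS, sp_cons, map_sub, map_smul, LinearMap.sub_apply,
    LinearMap.smul_apply, cross_self, smul_zero, sub_zero, cross_sp_pivec]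
  match_scalars
  field_simp

theorem neg_nuLS_div_smul_rl {γ : ℝ} (hγ : γ ≠ 0) (p : (Fin 4 → ℝ) × (Fin 4 → ℝ)) :
    -(nuLS γ p / γ) • rl γ p =
      (Real.sqrt (-2 * Een γ p))⁻¹ •
        ((γ / nrm3 (sp p.1)) • sp p.1 - crossProduct (pivec p) (mu p)) := by
  rw [rl, nuLS, div_div_cancel_left' hγ]
  module

namespace TS3

variable {p : (Fin 4 → ℝ) × (Fin 4 → ℝ)}

theorem sp_dotProduct_sp_self (hp : p ∈ TS3) : sp p.1 ⬝ᵥ sp p.1 = 1 - p.1 0 ^ 2 := by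
  linear_combination (dotProduct_eq_mul_add_sp p.1 p.1).symm.trans hp.1

theorem sp_dotProduct_sp (hp : p ∈ TS3) : sp p.1 ⬝ᵥ sp p.2 = -(p.1 0 * p.2 0) := by
  linear_combination (dotProduct_eq_mul_add_sp p.1 p.2).symm.trans hp.2

theorem sp_dotProduct_pivec (hp : p ∈ TS3) : sp p.1 ⬝ᵥ pivec p = -p.2 0 := by
  simp only [pivec, dotProduct_sub, dotProduct_smul, smul_eq_mul, sp_dotProduct_sp hp,
    sp_dotProduct_sp_self hp]
  ring

theorem Een_eq (γ : ℝ) (hp : p ∈ TS3) :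
    Een γ p = pivec p ⬝ᵥ pivec p / 2 - γ * p.1 0 / nrm3 (sp p.1) := by
  have hQQ := sp_dotProduct_sp_self hp
  have hQV := sp_dotProduct_sp hp
  have hmu : mu p ⬝ᵥ mu p = (1 - p.1 0 ^ 2) * (sp p.2 ⬝ᵥ sp p.2) - (p.1 0 * p.2 0) ^ 2 := by
    rw [mu, cross_dot_cross, hQQ, hQV, dotProduct_comm (sp p.2) (sp p.1), hQV]; ring
  have hpi : pivec p ⬝ᵥ pivec p = p.1 0 ^ 2 * (sp p.2 ⬝ᵥ sp p.2) + 2 * p.1 0 ^ 2 * p.2 0 ^ 2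
      + p.2 0 ^ 2 * (1 - p.1 0 ^ 2) := by
    simp only [pivec, dotProduct_sub, sub_dotProduct, dotProduct_smul, smul_dotProduct,
      smul_eq_mul, dotProduct_comm (sp p.2) (sp p.1), hQQ, hQV]
    ring
  have hr : Real.sqrt (1 - p.1 0 ^ 2) = nrm3 (sp p.1) := by rw [nrm3, hQQ]
  rw [Een, Hham, hmu, hpi, dotProduct_eq_mul_add_sp p.2 p.2, hr]
  ring

theorem nuLS_smul_boost_alphaLS_betaLS {γ : ℝ} (hp : p ∈ TS3) (hγ : γ ≠ 0)
    (hE : Een γ p < 0) (hq0 : p.1 0 ≠ 0) (hr : nrm3 (sp p.1) ≠ 0) :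
    nuLS γ p • (alphaLS γ p 0 • sp (betaLS γ p) - betaLS γ p 0 • sp (alphaLS γ p)) =
      (Real.sqrt (-2 * Een γ p))⁻¹ •
        ((γ / nrm3 (sp p.1)) • sp p.1 - crossProduct (pivec p) (mu p)) := by
  have henergy : nrm3 (sp p.1) * (Real.sqrt (-2 * Een γ p) ^ 2 + pivec p ⬝ᵥ pivec p) =
      2 * γ * p.1 0 := by
    rw [Real.sq_sqrt (by linarith), Een_eq γ hp]; field_simp; ring
  have hs : Real.sqrt (-2 * Een γ p) ≠ 0 := (Real.sqrt_pos.mpr (by linarith)).ne'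
  rw [pivec_cross_mu p hq0]
  simp only [alphaLS, betaLS, sp_cons, Fin.cons_zero, sp_dotProduct_pivec hp, nuLS]
  generalize Real.sqrt (-2 * Een γ p) = s at hs henergy ⊢
  match_scalars <;> field_simp
  · linear_combination (-p.2 0) * henergy
  · ring

end TS3

theorem LS_map_intertwines_momentum_maps (γ : ℝ) (hγ : 0 < γ)
    (p : (Fin 4 → ℝ) × (Fin 4 → ℝ)) (hp : p ∈ TS3) (hqnz : sp p.1 ≠ 0)
    (hq0 : 0 < p.1 0) (hE : Een γ p < 0) (φ : ℝ) :
    crossProduct (sp (Real.sin φ • alphaLS γ p + Real.cos φ • betaLS γ p))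
        (sp (nuLS γ p • (-Real.cos φ • alphaLS γ p + Real.sin φ • betaLS γ p))) = mu p ∧
    (Real.sin φ • alphaLS γ p + Real.cos φ • betaLS γ p) 0 •
        sp (nuLS γ p • (-Real.cos φ • alphaLS γ p + Real.sin φ • betaLS γ p)) -
      (nuLS γ p • (-Real.cos φ • alphaLS γ p + Real.sin φ • betaLS γ p)) 0 •
        sp (Real.sin φ • alphaLS γ p + Real.cos φ • betaLS γ p) =
      (Real.sqrt (-2 * Een γ p))⁻¹ •
        ((γ / nrm3 (sp p.1)) • sp p.1 - crossProduct (pivec p) (crossProduct (sp p.1) (sp p.2))) ∧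
    (Real.sqrt (-2 * Een γ p))⁻¹ •
        ((γ / nrm3 (sp p.1)) • sp p.1 - crossProduct (pivec p) (crossProduct (sp p.1) (sp p.2))) =
      -(nuLS γ p / γ) • rl γ p := by
  have hr : nrm3 (sp p.1) ≠ 0 := nrm3_ne_zero hqnz
  have hν : nuLS γ p ≠ 0 := div_ne_zero hγ.ne' (Real.sqrt_pos.mpr (by linarith)).ne'
  have hrot := Real.sin_sq_add_cos_sq φ
  refine ⟨?_, ?_, (neg_nuLS_div_smul_rl hγ.ne' p).symm⟩
  · simp only [sp_add, sp_smul]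
    rw [crossProduct_rotate _ _ hrot]
    exact nuLS_smul_cross_alphaLS_betaLS hν hq0.ne' hr
  · rw [wedge_boost_rotate _ _ hrot]
    exact TS3.nuLS_smul_boost_alphaLS_betaLS hp hγ.ne' hE hq0.ne' hr
end
end

section
/- The gnomonic map Ψ intertwines E with the Euclidean Kepler Hamiltonian and the map J with the Euclidean momentum map: for (q,v) ∈ TS³ with q0 > 0 and 𝐪 ≠ 0, writing (𝐐,𝐕) = Ψ(q,v) = (𝐪/q0, 𝛑), one has (i) H_K(𝐐,𝐕) = ½𝛑·𝛑 − γq0/|𝐪| = E(q,v), and (ii) if moreover E < 0, then 𝐐×𝐕 = 𝛍 and −(γ/√(−2H_K))((1/γ)𝐕×(𝐐×𝐕) − 𝐐/|𝐐|) = 𝐞̃, i.e. Ψ*J_K = J = (𝛍, 𝐞̃). -/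
open Matrix Real

noncomputable section

/-- The gnomonic map `Ψ(q,v) = (𝐐,𝐕) = (𝐪/q₀, 𝛑)`. -/
def Psi (p : (Fin 4 → ℝ) × (Fin 4 → ℝ)) : (Fin 3 → ℝ) × (Fin 3 → ℝ) :=
  ((p.1 0)⁻¹ • sp p.1, pivec p)

/-- The Euclidean Kepler Hamiltonian `H_K(𝐐,𝐕) = ½ 𝐕·𝐕 - γ/|𝐐|`. -/
def HK (γ : ℝ) (QV : (Fin 3 → ℝ) × (Fin 3 → ℝ)) : ℝ :=
  (1 / 2) * (QV.2 ⬝ᵥ QV.2) - γ / nrm3 QV.1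

/-! On `TS³` the Lagrange identity `|𝛑|² + |𝛍|² = ⟨v,v⟩` and `√(1 - q₀²) = |𝐪|` turn `E` into
`½|𝛑|² - γ q₀/|𝐪|`, which is `H_K ∘ Ψ` because `|𝐐| = |𝐪|/q₀`. The scaling `𝐐 = 𝐪/q₀` drops out
of `𝐐 × 𝛑` since `𝐪 × 𝐪 = 0`, and `𝐐/|𝐐| = 𝐪/|𝐪|`, so `J_K ∘ Ψ = (𝛍, 𝐞̃)` term by term. -/

lemma dotProduct_eq_head_mul_add_sp (q v : Fin 4 → ℝ) : q ⬝ᵥ v = q 0 * v 0 + sp q ⬝ᵥ sp v := by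
  simp only [dotProduct, Fin.sum_univ_succ (n := 3), sp]

/-- The four-dimensional Lagrange identity, in the `3 + 1` splitting. -/
lemma pivec_dot_add_mu_dot (p : (Fin 4 → ℝ) × (Fin 4 → ℝ)) :
    pivec p ⬝ᵥ pivec p + mu p ⬝ᵥ mu p = (p.1 ⬝ᵥ p.1) * (p.2 ⬝ᵥ p.2) - (p.1 ⬝ᵥ p.2) ^ 2 := by
  simp only [pivec, mu, cross_dot_cross, dotProduct_eq_head_mul_add_sp p.1,
    dotProduct_eq_head_mul_add_sp p.2, sub_dotProduct, dotProduct_sub, smul_dotProduct,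
    dotProduct_smul, smul_eq_mul, dotProduct_comm (sp p.2) (sp p.1)]
  ring

lemma nrm3_smul (c : ℝ) (x : Fin 3 → ℝ) : nrm3 (c • x) = |c| * nrm3 x := by
  rw [nrm3, nrm3, smul_dotProduct, dotProduct_smul, smul_eq_mul, smul_eq_mul, ← mul_assoc,
    Real.sqrt_mul (mul_self_nonneg c), Real.sqrt_mul_self_eq_abs]

lemma sqrt_one_sub_sq_eq_nrm3 {q : Fin 4 → ℝ} (hq : q ⬝ᵥ q = 1) :
    Real.sqrt (1 - q 0 ^ 2) = nrm3 (sp q) := by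
  rw [nrm3, ← hq, dotProduct_eq_head_mul_add_sp, sq, add_sub_cancel_left]

lemma nrm3_Psi_fst {p : (Fin 4 → ℝ) × (Fin 4 → ℝ)} (hq0 : 0 ≤ p.1 0) :
    nrm3 (Psi p).1 = nrm3 (sp p.1) / p.1 0 := by
  rw [Psi, nrm3_smul, abs_of_nonneg (inv_nonneg.mpr hq0), inv_mul_eq_div]

lemma HK_Psi_eq (γ : ℝ) {p : (Fin 4 → ℝ) × (Fin 4 → ℝ)} (hq0 : 0 ≤ p.1 0) :
    HK γ (Psi p) = (1 / 2) * (pivec p ⬝ᵥ pivec p) - γ * p.1 0 / nrm3 (sp p.1) := by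
  rw [HK, nrm3_Psi_fst hq0, div_div_eq_mul_div]
  rfl

lemma Een_eq_of_mem_TS3 (γ : ℝ) {p : (Fin 4 → ℝ) × (Fin 4 → ℝ)} (hp : p ∈ TS3) :
    Een γ p = (1 / 2) * (pivec p ⬝ᵥ pivec p) - γ * p.1 0 / nrm3 (sp p.1) := by
  obtain ⟨hqq, hqv⟩ := hp
  have hpi : pivec p ⬝ᵥ pivec p = p.2 ⬝ᵥ p.2 - mu p ⬝ᵥ mu p := by
    have lagrange := pivec_dot_add_mu_dot p
    rw [hqq, hqv] at lagrange
    linarith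
  rw [Een, Hham, sqrt_one_sub_sq_eq_nrm3 hqq, hpi]
  ring

lemma cross_Psi_eq_mu {p : (Fin 4 → ℝ) × (Fin 4 → ℝ)} (hq0 : p.1 0 ≠ 0) :
    (Psi p).1 ⨯₃ (Psi p).2 = mu p := by
  simp only [Psi, pivec, mu, map_smul, map_sub, LinearMap.smul_apply, cross_self,
    smul_zero, sub_zero, smul_smul, mul_inv_cancel₀ hq0, one_smul]

lemma inv_nrm3_smul_Psi_fst {p : (Fin 4 → ℝ) × (Fin 4 → ℝ)} (hq0 : 0 < p.1 0) :
    (nrm3 (Psi p).1)⁻¹ • (Psi p).1 = (nrm3 (sp p.1))⁻¹ • sp p.1 := by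
  rw [nrm3_Psi_fst hq0.le, Psi, smul_smul, inv_div, div_mul_eq_mul_div, mul_inv_cancel₀ hq0.ne',
    one_div]

theorem gnomonic_map_intertwines_general (γ : ℝ)
    (p : (Fin 4 → ℝ) × (Fin 4 → ℝ)) (hp : p ∈ TS3) (hq0 : 0 < p.1 0) :
    HK γ (Psi p) = (1 / 2) * (pivec p ⬝ᵥ pivec p) - γ * p.1 0 / nrm3 (sp p.1) ∧
    HK γ (Psi p) = Een γ p ∧
    (Een γ p < 0 →
      crossProduct (Psi p).1 (Psi p).2 = mu p ∧
      -(γ / Real.sqrt (-2 * HK γ (Psi p))) •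
          (γ⁻¹ • crossProduct (Psi p).2 (crossProduct (Psi p).1 (Psi p).2) -
            (nrm3 (Psi p).1)⁻¹ • (Psi p).1) =
        -(nuLS γ p / γ) • rl γ p) := by
  have hHK := HK_Psi_eq γ hq0.le
  have hE : HK γ (Psi p) = Een γ p := hHK.trans (Een_eq_of_mem_TS3 γ hp).symm
  refine ⟨hHK, hE, fun _ => ⟨cross_Psi_eq_mu hq0.ne', ?_⟩⟩
  rw [cross_Psi_eq_mu hq0.ne', inv_nrm3_smul_Psi_fst hq0, hE, rl, nuLS]
  ext i
  simp only [Psi, Pi.smul_apply, Pi.sub_apply, smul_eq_mul]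
  -- the two sides differ by a multiple of `γ⁻¹ * γ * γ - γ`
  linear_combination
    (-(Real.sqrt (-2 * Een γ p))⁻¹ * (nrm3 (sp p.1))⁻¹ * sp p.1 i) * inv_mul_mul_self γ

theorem gnomonic_map_intertwines (γ : ℝ) (hγ : 0 < γ)
    (p : (Fin 4 → ℝ) × (Fin 4 → ℝ)) (hp : p ∈ TS3) (hq0 : 0 < p.1 0) (hqnz : sp p.1 ≠ 0) :
    HK γ (Psi p) = (1 / 2) * (pivec p ⬝ᵥ pivec p) - γ * p.1 0 / nrm3 (sp p.1) ∧
    HK γ (Psi p) = Een γ p ∧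
    (Een γ p < 0 →
      crossProduct (Psi p).1 (Psi p).2 = mu p ∧
      -(γ / Real.sqrt (-2 * HK γ (Psi p))) •
          (γ⁻¹ • crossProduct (Psi p).2 (crossProduct (Psi p).1 (Psi p).2) -
            (nrm3 (Psi p).1)⁻¹ • (Psi p).1) =
        -(nuLS γ p / γ) • rl γ p) :=
  gnomonic_map_intertwines_general γ p hp hq0

end
end

section
/- The gnomonic map Ψ is not symplectic: there exist a point (q,v) ∈ TS³ with q0 > 0 and tangent vectors u, w ∈ ℝ⁴×ℝ⁴ tangent to TS³ at (q,v) (i.e., writing u = (u_q,u_v), w = (w_q,w_v): ⟨q,u_q⟩ = 0, ⟨q,u_v⟩ + ⟨v,u_q⟩ = 0, and similarly for w) such that ω₃(DΨ_{(q,v)}(u), DΨ_{(q,v)}(w)) ≠ ω₄(u,w), where DΨ is the Fréchet derivative of Ψ, ω₄((a,b),(a',b')) = ⟨a,b'⟩ − ⟨a',b⟩ is the standard symplectic form on ℝ⁴×ℝ⁴, and ω₃((a,b),(a',b')) = a·b' − a'·b is the standard symplectic form on ℝ³×ℝ³. -/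
open Matrix Real

noncomputable section

/-!
At a point `(q, 0)` at rest the derivative of `Ψ` sends `(t, 0)` to `(q₀⁻² 𝛑(q, t), 0)` and `(0, t)`
to `(0, 𝛑(q, t))`. On `TS³` one has `|𝛑(q, v)|² = q₀² |v|² + v₀²`, so the pulled back form on this
pair equals `ω₄((t, 0), (0, t)) + (t₀ / q₀)²`, which differs from `ω₄` as soon as `t₀ ≠ 0`.
-/

def spCLM : (Fin 4 → ℝ) →L[ℝ] Fin 3 → ℝ :=
  ContinuousLinearMap.pi fun i => ContinuousLinearMap.proj i.succ

@[simp]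
theorem spCLM_apply (q : Fin 4 → ℝ) : spCLM q = sp q := rfl

def symplecticForm {n : ℕ} (x y : (Fin n → ℝ) × (Fin n → ℝ)) : ℝ :=
  x.1 ⬝ᵥ y.2 - y.1 ⬝ᵥ x.2

theorem pivec_dotProduct_self {p : (Fin 4 → ℝ) × (Fin 4 → ℝ)} (hp : p ∈ TS3) :
    pivec p ⬝ᵥ pivec p = p.1 0 ^ 2 * (p.2 ⬝ᵥ p.2) + p.2 0 ^ 2 := by
  obtain ⟨hqq, hqv⟩ := hp
  simp only [pivec, dotProduct, Fin.sum_univ_three, Fin.sum_univ_four] at *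
  simp only [Pi.sub_apply, Pi.smul_apply, smul_eq_mul, sp, Fin.reduceSucc]
  linear_combination (p.2 0 ^ 2) * hqq - 2 * p.1 0 * p.2 0 * hqv

theorem fderiv_Psi_apply {p : (Fin 4 → ℝ) × (Fin 4 → ℝ)} (hp : p.1 0 ≠ 0)
    (u : (Fin 4 → ℝ) × (Fin 4 → ℝ)) :
    fderiv ℝ Psi p u =
      ((p.1 0)⁻¹ • sp u.1 - (u.1 0 / p.1 0 ^ 2) • sp p.1, pivec (p.1, u.2) + pivec (u.1, p.2)) := by
  have hfst : HasFDerivAt (𝕜 := ℝ) Prod.fst _ p := hasFDerivAt_fst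
  have hsnd : HasFDerivAt (𝕜 := ℝ) Prod.snd _ p := hasFDerivAt_snd
  have hq0 := (hasFDerivAt_apply (𝕜 := ℝ) 0 p.1).comp p hfst
  have hv0 := (hasFDerivAt_apply (𝕜 := ℝ) 0 p.2).comp p hsnd
  have hq := spCLM.hasFDerivAt.comp p hfst
  have hv := spCLM.hasFDerivAt.comp p hsnd
  have hPsi : HasFDerivAt Psi _ p :=
    (((hasFDerivAt_inv hp).comp p hq0).smul hq).prodMk ((hq0.smul hv).sub (hv0.smul hq))
  rw [hPsi.fderiv]
  ext i <;> simp [pivec, sp] <;> ring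

theorem symplecticForm_fderiv_Psi_at_rest {q t : Fin 4 → ℝ} (hqt : (q, t) ∈ TS3) (hq0 : q 0 ≠ 0) :
    symplecticForm (fderiv ℝ Psi (q, 0) (t, 0)) (fderiv ℝ Psi (q, 0) (0, t)) =
      symplecticForm (t, 0) (0, t) + (t 0 / q 0) ^ 2 := by
  have hu : fderiv ℝ Psi (q, 0) (t, 0) = ((q 0 ^ 2)⁻¹ • pivec (q, t), 0) := by
    rw [fderiv_Psi_apply hq0]
    ext i
    · simp [pivec, sp]
      field_simp
    · simp [pivec, sp]
  have hw : fderiv ℝ Psi (q, 0) (0, t) = (0, pivec (q, t)) := by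
    rw [fderiv_Psi_apply hq0]
    ext i <;> simp [pivec, sp]
  rw [hu, hw, symplecticForm, symplecticForm, smul_dotProduct, pivec_dotProduct_self hqt]
  simp only [dotProduct_zero, sub_zero, smul_eq_mul]
  field_simp

theorem exists_mem_TS3_fst_pos_snd_ne_zero : ∃ q t : Fin 4 → ℝ, (q, t) ∈ TS3 ∧ 0 < q 0 ∧ t 0 ≠ 0 :=
  ⟨![3/5, 4/5, 0, 0], ![-4/5, 3/5, 0, 0],
    by norm_num [TS3, dotProduct, Fin.sum_univ_four, Matrix.cons_val_two, Matrix.cons_val_three]⟩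

theorem gnomonic_map_not_symplectic :
    ∃ (p u w : (Fin 4 → ℝ) × (Fin 4 → ℝ)),
      p ∈ TS3 ∧ 0 < p.1 0 ∧
      p.1 ⬝ᵥ u.1 = 0 ∧ p.1 ⬝ᵥ u.2 + p.2 ⬝ᵥ u.1 = 0 ∧
      p.1 ⬝ᵥ w.1 = 0 ∧ p.1 ⬝ᵥ w.2 + p.2 ⬝ᵥ w.1 = 0 ∧
      (fderiv ℝ Psi p u).1 ⬝ᵥ (fderiv ℝ Psi p w).2 -
          (fderiv ℝ Psi p w).1 ⬝ᵥ (fderiv ℝ Psi p u).2 ≠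
        u.1 ⬝ᵥ w.2 - w.1 ⬝ᵥ u.2 := by
  obtain ⟨q, t, hqt, hq0, ht0⟩ := exists_mem_TS3_fst_pos_snd_ne_zero
  refine ⟨(q, 0), (t, 0), (0, t), ⟨hqt.1, dotProduct_zero q⟩, hq0, hqt.2, ?_,
    dotProduct_zero q, ?_, ?_⟩
  · simp
  · simpa using hqt.2
  · have hdistort := symplecticForm_fderiv_Psi_at_rest hqt hq0.ne'
    have hpos : 0 < (t 0 / q 0) ^ 2 := by positivity
    unfold symplecticForm at hdistort
    rw [hdistort]
    linarith

end
end
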